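/- Let Q > 0, m ∈ ℝ, and let A⁰, A¹, A², A³ : ℝ⁴ → ℝ be smooth. For a smooth function f : ℝ⁴ × ℝ → ℝ, set D_j f := ∂f/∂xʲ + Aʲ·∂f/∂u for j = 0, 1, 2, 3 (the Aʲ depend only on x ∈ ℝ⁴), and set ε₀ = −1, ε₁ = ε₂ = ε₃ = 1. Let φ₁, φ₂ : ℝ⁴ → ℝ be smooth and define a(x, u) := φ₁(x)·cos(Q u) + φ₂(x)·sin(Q u). Assume that −Σ_{j=0}^{3} ε_j · D_j(D_j a) + m·a = 0 everywhere on ℝ⁴ × ℝ. Then the complex function a_c := φ₁ + i·φ₂ satisfies Σ_{j=0}^{3} ε_j · (i∂/∂xʲ + Q Aʲ)² a_c + m·a_c = 0, where (i∂/∂xʲ + Q Aʲ)ψ := i·∂ψ/∂xʲ + Q·Aʲ·ψ and the square denotes applying this operator twice. -/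

import Mathlib

/-!
Encode the pair `(φ₁, φ₂)` as `ψ = φ₁ + iφ₂` and `a` as its wave `Re ψ · cos Qu + Im ψ · sin Qu`.
Since `∂/∂u` acts on waves as multiplication of `ψ` by `-iQ`, the operator `D_j` maps the wave of `ψ`
to the wave of the covariant derivative `∂_jψ - iQAʲψ`, while `i∂_j + QAʲ = i (∂_j - iQAʲ)`, so its
square is minus the square of the covariant derivative. The real equation thus says that the wave of
`Σ ε_j (∂_j - iQAʲ)²ψ - mψ` vanishes, and reading it at `Qu = 0` and `Qu = π/2` (here `Q ≠ 0`)
gives its real and imaginary parts.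
-/

/-- Partial derivative of `f` in the direction `v` (as a function). -/
noncomputable def pder {E F : Type*} [NormedAddCommGroup E] [NormedSpace ℝ E]
    [NormedAddCommGroup F] [NormedSpace ℝ F] (v : E) (f : E → F) : E → F :=
  fun x => fderiv ℝ f x v

/-- Coordinate direction `∂/∂xʲ` in `ℝ⁴ × ℝ`. -/
noncomputable def dxu (j : Fin 4) : (Fin 4 → ℝ) × ℝ := (Pi.single j 1, 0)

/-- Direction `∂/∂u` in `ℝ⁴ × ℝ`. -/
noncomputable def du : (Fin 4 → ℝ) × ℝ := (0, 1)

/-- Coordinate direction `∂/∂xʲ` in `ℝ⁴`. -/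
noncomputable def dx (j : Fin 4) : Fin 4 → ℝ := Pi.single j 1

/-- The operator `D_j f = ∂f/∂xʲ + Aʲ ∂f/∂u` on functions on `ℝ⁴ × ℝ`. -/
noncomputable def Dop (A : Fin 4 → (Fin 4 → ℝ) → ℝ) (j : Fin 4)
    (f : (Fin 4 → ℝ) × ℝ → ℝ) : (Fin 4 → ℝ) × ℝ → ℝ :=
  fun q => pder (dxu j) f q + A j q.1 * pder du f q

/-- The signs `ε₀ = -1`, `ε₁ = ε₂ = ε₃ = 1`. -/
noncomputable def eps (j : Fin 4) : ℝ := if j = 0 then -1 else 1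

/-- The operator `(i ∂/∂xʲ + Q Aʲ) ψ = i ∂ψ/∂xʲ + Q Aʲ ψ` on complex functions on `ℝ⁴`. -/
noncomputable def Cop (Q : ℝ) (A : Fin 4 → (Fin 4 → ℝ) → ℝ) (j : Fin 4)
    (ψ : (Fin 4 → ℝ) → ℂ) : (Fin 4 → ℝ) → ℂ :=
  fun x => Complex.I * pder (dx j) ψ x + ((Q * A j x : ℝ) : ℂ) * ψ x

open Complex

noncomputable def wave {E : Type*} (Q : ℝ) (ψ : E → ℂ) : E × ℝ → ℝ :=
  fun q => (ψ q.1).re * Real.cos (Q * q.2) + (ψ q.1).im * Real.sin (Q * q.2)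

theorem pder_wave {E : Type*} [NormedAddCommGroup E] [NormedSpace ℝ E] (Q : ℝ) {ψ : E → ℂ}
    (q : E × ℝ) (hψ : DifferentiableAt ℝ ψ q.1) (v : E) (s : ℝ) :
    pder (v, s) (wave Q ψ) q = wave Q (fun x => fderiv ℝ ψ x v - (s * Q : ℝ) * I * ψ x) q := by
  have hθ : HasFDerivAt (fun p : E × ℝ => Q * p.2) (Q • ContinuousLinearMap.snd ℝ E ℝ) q :=
    hasFDerivAt_snd.const_mul Q
  have hψ₁ : HasFDerivAt (fun p : E × ℝ => ψ p.1)
      ((fderiv ℝ ψ q.1).comp (ContinuousLinearMap.fst ℝ E ℝ)) q :=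
    hψ.hasFDerivAt.comp q hasFDerivAt_fst
  have hw : HasFDerivAt (wave Q ψ) _ q :=
    ((reCLM.hasFDerivAt.comp q hψ₁).mul ((Real.hasDerivAt_cos _).comp_hasFDerivAt q hθ)).add
      ((imCLM.hasFDerivAt.comp q hψ₁).mul ((Real.hasDerivAt_sin _).comp_hasFDerivAt q hθ))
  rw [pder, hw.fderiv]
  simp only [Function.comp_apply, reCLM_apply, neg_smul, smul_neg, imCLM_apply, add_apply,
    neg_apply, smul_apply, ContinuousLinearMap.coe_snd', smul_eq_mul,
    ContinuousLinearMap.comp_apply, ContinuousLinearMap.coe_fst', wave, ofReal_mul, sub_re, mul_re,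
    ofReal_re, ofReal_im, mul_zero, sub_zero, I_re, mul_im, zero_mul, add_zero, I_im, mul_one,
    sub_self, zero_sub, sub_neg_eq_add, sub_im]
  ring

theorem eq_zero_of_forall_re_mul_cos_add_im_mul_sin {Q : ℝ} (hQ : Q ≠ 0) {z : ℂ}
    (h : ∀ u, z.re * Real.cos (Q * u) + z.im * Real.sin (Q * u) = 0) : z = 0 := by
  have h0 := h 0
  have h1 := h (Real.pi / (2 * Q))
  rw [show Q * (Real.pi / (2 * Q)) = Real.pi / 2 by field_simp] at h1
  simp only [mul_zero, Real.cos_zero, mul_one, Real.sin_zero, add_zero, Real.cos_pi_div_two,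
    Real.sin_pi_div_two, zero_add] at h0 h1
  exact Complex.ext h0 h1

section CovariantDerivative

variable (Q : ℝ) (A : Fin 4 → (Fin 4 → ℝ) → ℝ) (j : Fin 4)

noncomputable def covDeriv (ψ : (Fin 4 → ℝ) → ℂ) : (Fin 4 → ℝ) → ℂ :=
  fun x => pder (dx j) ψ x - I * ((Q * A j x : ℝ) : ℂ) * ψ x

theorem Dop_wave {ψ : (Fin 4 → ℝ) → ℂ} (hψ : Differentiable ℝ ψ) :
    Dop A j (wave Q ψ) = wave Q (covDeriv Q A j ψ) := by
  funext q
  simp only [Dop, dxu, du, pder_wave Q q (hψ q.1)]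
  simp only [wave, covDeriv, pder, dx, zero_mul, ofReal_zero, sub_zero, map_zero, one_mul,
    zero_sub, neg_re, mul_re, ofReal_re, I_re, mul_zero, ofReal_im, I_im, mul_one, sub_self,
    mul_im, add_zero, neg_neg, neg_im, zero_add, neg_mul, ofReal_mul, sub_re, sub_neg_eq_add,
    sub_im]
  ring

theorem Cop_eq_I_mul_covDeriv (ψ : (Fin 4 → ℝ) → ℂ) :
    Cop Q A j ψ = fun x => I * covDeriv Q A j ψ x := by
  funext x
  simp only [Cop, covDeriv]
  linear_combination ((Q * A j x : ℝ) : ℂ) * ψ x * I_sq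

theorem covDeriv_const_mul {ψ : (Fin 4 → ℝ) → ℂ} (hψ : Differentiable ℝ ψ) (c : ℂ) :
    covDeriv Q A j (fun x => c * ψ x) = fun x => c * covDeriv Q A j ψ x := by
  funext x
  simp only [covDeriv, pder, fderiv_const_mul (hψ x), smul_apply, smul_eq_mul]
  ring

theorem Cop_Cop {ψ : (Fin 4 → ℝ) → ℂ} (hψ : Differentiable ℝ (covDeriv Q A j ψ)) :
    Cop Q A j (Cop Q A j ψ) = fun x => -covDeriv Q A j (covDeriv Q A j ψ) x := by
  simp only [Cop_eq_I_mul_covDeriv, covDeriv_const_mul Q A j hψ, ← mul_assoc, I_mul_I,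
    neg_one_mul]

variable {Q A j} in
theorem ContDiff.covDeriv {ψ : (Fin 4 → ℝ) → ℂ} (hψ : ContDiff ℝ (⊤ : ℕ∞) ψ)
    (hA : ContDiff ℝ (⊤ : ℕ∞) (A j)) : ContDiff ℝ (⊤ : ℕ∞) (covDeriv Q A j ψ) :=
  ((hψ.fderiv_right le_rfl).clm_apply contDiff_const).sub
    ((contDiff_const.mul (ofRealCLM.contDiff.comp (contDiff_const.mul hA))).mul hψ)

end CovariantDerivative

theorem stmt8 (Q m : ℝ) (hQ : 0 < Q)
    (A : Fin 4 → (Fin 4 → ℝ) → ℝ) (hA : ∀ j, ContDiff ℝ (⊤ : ℕ∞) (A j))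
    (φ₁ φ₂ : (Fin 4 → ℝ) → ℝ)
    (hφ₁ : ContDiff ℝ (⊤ : ℕ∞) φ₁) (hφ₂ : ContDiff ℝ (⊤ : ℕ∞) φ₂)
    (a : (Fin 4 → ℝ) × ℝ → ℝ)
    (ha : ∀ (x : Fin 4 → ℝ) (u : ℝ),
      a (x, u) = φ₁ x * Real.cos (Q * u) + φ₂ x * Real.sin (Q * u))
    (heq : ∀ q : (Fin 4 → ℝ) × ℝ,
      -(∑ j : Fin 4, eps j * Dop A j (Dop A j a) q) + m * a q = 0) :
    ∀ x : Fin 4 → ℝ,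
      (∑ j : Fin 4, (eps j : ℂ) *
          Cop Q A j (Cop Q A j (fun y => (φ₁ y : ℂ) + Complex.I * (φ₂ y : ℂ))) x)
        + (m : ℂ) * ((φ₁ x : ℂ) + Complex.I * (φ₂ x : ℂ)) = 0 := by
  intro x
  set ψ : (Fin 4 → ℝ) → ℂ := fun y => (φ₁ y : ℂ) + I * (φ₂ y : ℂ)
  have hψ : ContDiff ℝ (⊤ : ℕ∞) ψ :=
    (ofRealCLM.contDiff.comp hφ₁).add (contDiff_const.mul (ofRealCLM.contDiff.comp hφ₂))
  have hDψ j : ContDiff ℝ (⊤ : ℕ∞) (covDeriv Q A j ψ) := hψ.covDeriv (hA j)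
  have ha_wave : a = wave Q ψ := funext fun q => by simp [ψ, wave, ha q.1 q.2]
  have hDDa j : Dop A j (Dop A j a) = wave Q (covDeriv Q A j (covDeriv Q A j ψ)) := by
    rw [ha_wave, Dop_wave Q A j (hψ.differentiable (by simp)),
      Dop_wave Q A j ((hDψ j).differentiable (by simp))]
  have hKG : ∑ j, (eps j : ℂ) * covDeriv Q A j (covDeriv Q A j ψ) x - m * ψ x = 0 := by
    refine eq_zero_of_forall_re_mul_cos_add_im_mul_sin hQ.ne' fun u => ?_
    have h := heq (x, u)
    simp only [hDDa, Fin.sum_univ_four] at h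
    simp only [ha_wave, wave] at h
    simp only [Fin.sum_univ_four, sub_re, add_re, mul_re, ofReal_re, ofReal_im, zero_mul, sub_zero,
      sub_im, add_im, mul_im, add_zero]
    linear_combination -h
  simp only [Cop_Cop Q A _ ((hDψ _).differentiable (by simp)), Fin.sum_univ_four] at hKG ⊢
  linear_combination -hKG
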